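/- arXiv:2311.06138 — 2 statements merged into one kernel-verified Lean document; each statement's English description precedes it below -/
import Mathlib

section
/- Let X be a nonnegative real random variable with P(X ≥ E[X] + t) ≤ exp(-t²/(2σ²)) for all t > 0. Then for every R > E[X], E[X² · 1_{X ≥ R}] ≤ exp(-(R - E[X])²/(4σ²)) · √(2π) · ((E[X])² + 2σ²). -/
open MeasureTheory Real Set Filter

/-!
Write `m = E[X]` and `C = exp (-(R - m)² / (2σ²))`. By the layer-cake formula for `P` restricted
to `{R ≤ X}`, `E[X² 1_{X ≥ R}] = ∫₀^∞ 2t P(X ≥ max R t) dt`. The tail hypothesis bounds the part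
`t ≤ R` by `C R²`. For `t > R` split `2t = 2(t - m) + 2m`: the first term integrates exactly to
`2σ² C`, and for the second, `(t - m)² ≥ (R - m)² + (t - R)²` leaves `C` times a half Gaussian
integral, `2m C √(2π) σ / 2`. Finally, with `x = (R - m)² / (4σ²)` we have `C = exp (-2x)`; one
factor `exp (-x) ≤ 1 / (1 + x)` absorbs the growth of `R² = (m + (R - m))²`, which is a
polynomial inequality once `√(2π) ≥ 5/2`.
-/

section GaussianIntegrals

variable {σ : ℝ}

theorem setIntegral_Ioi_comp_sub (f : ℝ → ℝ) (c : ℝ) :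
    ∫ t in Ioi c, f (t - c) = ∫ t in Ioi 0, f t := by
  have h := (measurePreserving_sub_right volume c).setIntegral_preimage_emb
    (measurableEmbedding_subRight c) f (Ioi 0)
  rwa [preimage_sub_const_Ioi, zero_add] at h

theorem exp_neg_sq_div_eq (σ x : ℝ) :
    exp (-x ^ 2 / (2 * σ ^ 2)) = exp (-(2 * σ ^ 2)⁻¹ * x ^ 2) := by
  rw [neg_div, neg_mul, div_eq_inv_mul]

theorem integrable_exp_neg_sq_sub_div (hσ : σ ≠ 0) (c : ℝ) :
    Integrable fun t => exp (-(t - c) ^ 2 / (2 * σ ^ 2)) := by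
  simp_rw [exp_neg_sq_div_eq]
  exact (integrable_exp_neg_mul_sq (by positivity)).comp_sub_right c

theorem integrable_sub_mul_exp_neg_sq_sub_div (hσ : σ ≠ 0) (c : ℝ) :
    Integrable fun t => (t - c) * exp (-(t - c) ^ 2 / (2 * σ ^ 2)) := by
  simp_rw [exp_neg_sq_div_eq]
  exact (integrable_mul_exp_neg_mul_sq (by positivity)).comp_sub_right c

theorem integrable_mul_exp_neg_sq_sub_div (hσ : σ ≠ 0) (c : ℝ) :
    Integrable fun t => t * exp (-(t - c) ^ 2 / (2 * σ ^ 2)) := by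
  refine ((integrable_sub_mul_exp_neg_sq_sub_div hσ c).add
    ((integrable_exp_neg_sq_sub_div hσ c).const_mul c)).congr (ae_of_all _ fun t => ?_)
  simp only [Pi.add_apply]
  ring

theorem integral_Ioi_exp_neg_sq_sub_div (hσ : 0 < σ) (c : ℝ) :
    ∫ t in Ioi c, exp (-(t - c) ^ 2 / (2 * σ ^ 2)) = √(2 * π) * σ / 2 := by
  rw [setIntegral_Ioi_comp_sub (fun t => exp (-t ^ 2 / (2 * σ ^ 2))) c]
  simp_rw [exp_neg_sq_div_eq]
  rw [integral_gaussian_Ioi, div_inv_eq_mul, show π * (2 * σ ^ 2) = 2 * π * σ ^ 2 by ring,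
    sqrt_mul' _ (sq_nonneg σ), sqrt_sq hσ.le]

theorem hasDerivAt_exp_neg_sq_sub_div (hσ : σ ≠ 0) (c t : ℝ) :
    HasDerivAt (fun t => -(2 * σ ^ 2) * exp (-(t - c) ^ 2 / (2 * σ ^ 2)))
      (2 * (t - c) * exp (-(t - c) ^ 2 / (2 * σ ^ 2))) t := by
  have h : HasDerivAt (fun t => -(t - c) ^ 2 / (2 * σ ^ 2))
      (-(2 * (t - c) ^ 1 * 1) / (2 * σ ^ 2)) t :=
    (((hasDerivAt_id t).sub_const c).pow 2).neg.div_const _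
  refine (h.exp.const_mul _).congr_deriv ?_
  field_simp

theorem tendsto_exp_neg_sq_sub_div (hσ : σ ≠ 0) (c : ℝ) :
    Tendsto (fun t => exp (-(t - c) ^ 2 / (2 * σ ^ 2))) atTop (nhds 0) := by
  have h : Tendsto (fun t => (t - c) ^ 2 / (2 * σ ^ 2)) atTop atTop :=
    ((tendsto_pow_atTop two_ne_zero).comp
      (tendsto_atTop_add_const_right _ (-c) tendsto_id)).atTop_div_const (by positivity)
  simpa [Function.comp_def, neg_div] using
    tendsto_exp_atBot.comp (tendsto_neg_atTop_atBot.comp h)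

theorem integral_Ioi_mul_exp_neg_sq_sub_div (hσ : σ ≠ 0) (c R : ℝ) :
    ∫ t in Ioi R, 2 * (t - c) * exp (-(t - c) ^ 2 / (2 * σ ^ 2)) =
      2 * σ ^ 2 * exp (-(R - c) ^ 2 / (2 * σ ^ 2)) := by
  have hint : IntegrableOn (fun t => 2 * (t - c) * exp (-(t - c) ^ 2 / (2 * σ ^ 2))) (Ioi R) := by
    simpa only [mul_assoc] using
      ((integrable_sub_mul_exp_neg_sq_sub_div hσ c).const_mul 2).integrableOn
  rw [integral_Ioi_of_hasDerivAt_of_tendsto' (fun t _ => hasDerivAt_exp_neg_sq_sub_div hσ c t)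
    hint (by simpa using (tendsto_exp_neg_sq_sub_div hσ c).const_mul (-(2 * σ ^ 2)))]
  ring

end GaussianIntegrals

section TailIntegral

variable {m R σ : ℝ}

theorem exp_neg_sq_sub_div_le_mul (hmR : m ≤ R) {t : ℝ} (hRt : R ≤ t) :
    exp (-(t - m) ^ 2 / (2 * σ ^ 2)) ≤
      exp (-(R - m) ^ 2 / (2 * σ ^ 2)) * exp (-(t - R) ^ 2 / (2 * σ ^ 2)) := by
  rw [← exp_add, exp_le_exp, ← add_div]
  exact div_le_div_of_nonneg_right
    (by nlinarith [mul_nonneg (sub_nonneg.2 hmR) (sub_nonneg.2 hRt)]) (by positivity)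

theorem integral_Ioi_mul_exp_neg_sq_sub_div_le (hσ : 0 < σ) (hm : 0 ≤ m) (hmR : m ≤ R) :
    ∫ t in Ioi R, 2 * t * exp (-(t - m) ^ 2 / (2 * σ ^ 2)) ≤
      exp (-(R - m) ^ 2 / (2 * σ ^ 2)) * (2 * σ ^ 2 + √(2 * π) * m * σ) := by
  set C := exp (-(R - m) ^ 2 / (2 * σ ^ 2))
  have hint₁ : IntegrableOn (fun t => 2 * (t - m) * exp (-(t - m) ^ 2 / (2 * σ ^ 2))) (Ioi R) := by
    simpa only [mul_assoc] using
      ((integrable_sub_mul_exp_neg_sq_sub_div hσ.ne' m).const_mul 2).integrableOn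
  have hint₂ := ((integrable_exp_neg_sq_sub_div hσ.ne' m).const_mul (2 * m)).integrableOn
    (s := Ioi R)
  have hint₃ := ((integrable_exp_neg_sq_sub_div hσ.ne' R).const_mul (2 * m * C)).integrableOn
    (s := Ioi R)
  calc ∫ t in Ioi R, 2 * t * exp (-(t - m) ^ 2 / (2 * σ ^ 2))
      = ∫ t in Ioi R, (2 * (t - m) * exp (-(t - m) ^ 2 / (2 * σ ^ 2)) +
          2 * m * exp (-(t - m) ^ 2 / (2 * σ ^ 2))) := by
        congr 1; ext t; ring
    _ = 2 * σ ^ 2 * C + ∫ t in Ioi R, 2 * m * exp (-(t - m) ^ 2 / (2 * σ ^ 2)) := by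
        rw [integral_add hint₁ hint₂, integral_Ioi_mul_exp_neg_sq_sub_div hσ.ne']
    _ ≤ 2 * σ ^ 2 * C + ∫ t in Ioi R, 2 * m * C * exp (-(t - R) ^ 2 / (2 * σ ^ 2)) := by
        refine add_le_add_right
          (setIntegral_mono_on hint₂ hint₃ measurableSet_Ioi fun t ht => ?_) _
        rw [mul_assoc (2 * m)]
        exact mul_le_mul_of_nonneg_left (exp_neg_sq_sub_div_le_mul hmR ht.out.le) (by positivity)
    _ = C * (2 * σ ^ 2 + √(2 * π) * m * σ) := by
        rw [integral_const_mul, integral_Ioi_exp_neg_sq_sub_div hσ]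
        ring

theorem lintegral_Ioi_mul_exp_neg_max_sq_le (hσ : 0 < σ) (hm : 0 ≤ m) (hmR : m ≤ R) :
    ∫⁻ t in Ioi 0, ENNReal.ofReal (2 * t * exp (-(max R t - m) ^ 2 / (2 * σ ^ 2))) ≤
      ENNReal.ofReal
        (exp (-(R - m) ^ 2 / (2 * σ ^ 2)) * (R ^ 2 + 2 * σ ^ 2 + √(2 * π) * m * σ)) := by
  set C := exp (-(R - m) ^ 2 / (2 * σ ^ 2))
  have hR : 0 ≤ R := hm.trans hmR
  have hnear : ∫⁻ t in Ioc 0 R, ENNReal.ofReal (2 * t * exp (-(max R t - m) ^ 2 / (2 * σ ^ 2))) =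
      ENNReal.ofReal (C * R ^ 2) := by
    rw [setLIntegral_congr_fun measurableSet_Ioc fun t ht => by rw [max_eq_left ht.2],
      ← ofReal_integral_eq_lintegral_ofReal
        (by fun_prop : Continuous fun t => 2 * t * C).integrableOn_Ioc
        (ae_restrict_of_forall_mem measurableSet_Ioc fun t ht => by have := ht.1; positivity),
      ← intervalIntegral.integral_of_le hR, intervalIntegral.integral_mul_const,
      intervalIntegral.integral_const_mul, integral_id]
    ring_nf
  have hfar : ∫⁻ t in Ioi R, ENNReal.ofReal (2 * t * exp (-(max R t - m) ^ 2 / (2 * σ ^ 2))) =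
      ENNReal.ofReal (∫ t in Ioi R, 2 * t * exp (-(t - m) ^ 2 / (2 * σ ^ 2))) := by
    rw [setLIntegral_congr_fun measurableSet_Ioi fun t ht => by rw [max_eq_right ht.out.le]]
    refine (ofReal_integral_eq_lintegral_ofReal ?_ ?_).symm
    · simpa only [mul_assoc] using
        ((integrable_mul_exp_neg_sq_sub_div hσ.ne' m).const_mul 2).restrict (s := Ioi R)
    · exact ae_restrict_of_forall_mem measurableSet_Ioi fun t ht => by
        have := hR.trans_lt ht
        positivity
  rw [← Ioc_union_Ioi_eq_Ioi hR, lintegral_union measurableSet_Ioi (Ioc_disjoint_Ioi le_rfl),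
    hnear, hfar, ← ENNReal.ofReal_add (by positivity)
      (setIntegral_nonneg measurableSet_Ioi fun t ht => by have := hR.trans_lt ht; positivity)]
  exact ENNReal.ofReal_le_ofReal (by linarith [integral_Ioi_mul_exp_neg_sq_sub_div_le hσ hm hmR])

end TailIntegral

theorem lintegral_sq_le_of_meas_le {α : Type*} [MeasurableSpace α] {μ : Measure α} {f : α → ℝ}
    (hf : 0 ≤ᵐ[μ] f) (hfm : AEMeasurable f μ) {g : ℝ → ℝ}
    (hg : ∀ t > 0, μ {a | t ≤ f a} ≤ ENNReal.ofReal (g t)) :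
    ∫⁻ a, ENNReal.ofReal (f a ^ 2) ∂μ ≤ ∫⁻ t in Ioi 0, ENNReal.ofReal (2 * t * g t) := by
  have hlayer := lintegral_comp_eq_lintegral_meas_le_mul μ hf hfm (g := fun t => 2 * t)
    (fun t _ => (continuous_const_mul 2).intervalIntegrable 0 t)
    (ae_restrict_of_forall_mem measurableSet_Ioi fun t ht => by have := ht.out; positivity)
  calc ∫⁻ a, ENNReal.ofReal (f a ^ 2) ∂μ
      = ∫⁻ t in Ioi 0, μ {a | t ≤ f a} * ENNReal.ofReal (2 * t) := by
        rw [← hlayer]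
        refine lintegral_congr fun a => ?_
        rw [intervalIntegral.integral_const_mul, integral_id]
        ring_nf
    _ ≤ ∫⁻ t in Ioi 0, ENNReal.ofReal (2 * t * g t) := by
        refine setLIntegral_mono' measurableSet_Ioi fun t ht => ?_
        rw [mul_comm (2 * t), ENNReal.ofReal_mul' (q := 2 * t) (by have := ht.out; positivity)]
        exact mul_le_mul_left (hg t ht) _

theorem five_div_two_le_sqrt_two_mul_pi : 5 / 2 ≤ √(2 * π) := by
  rw [le_sqrt (by norm_num) (by positivity)]
  nlinarith [pi_gt_d2]

theorem mul_sq_add_le_of_five_div_two_le {K : ℝ} (hK : 5 / 2 ≤ K) (m τ s : ℝ) :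
    4 * s ^ 2 * ((m + τ) ^ 2 + 2 * s ^ 2 + K * m * s) ≤
      K * (m ^ 2 + 2 * s ^ 2) * (4 * s ^ 2 + τ ^ 2) := by
  have hK0 : (0 : ℝ) < K := by linarith
  have h19 : (0 : ℝ) ≤ 19 * K ^ 2 - 24 * K - 48 := by nlinarith
  have hKD : 0 ≤ K * (K * (m ^ 2 + 2 * s ^ 2) * (4 * s ^ 2 + τ ^ 2) -
      4 * s ^ 2 * ((m + τ) ^ 2 + 2 * s ^ 2 + K * m * s)) := by
    nlinarith [sq_nonneg (K * m * τ - 4 * s ^ 2),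
      mul_nonneg (sq_nonneg K) (sq_nonneg (6 * m * s - 5 * s ^ 2)),
      mul_nonneg (by linarith : (0 : ℝ) ≤ 8 * K - 20)
        (mul_nonneg (mul_nonneg hK0.le (sq_nonneg m)) (sq_nonneg s)),
      mul_nonneg (by linarith : (0 : ℝ) ≤ 2 * K - 4)
        (mul_nonneg (mul_nonneg hK0.le (sq_nonneg s)) (sq_nonneg τ)),
      mul_nonneg h19 (sq_nonneg (s ^ 2))]
  nlinarith [mul_pos hK0 hK0]

theorem exp_neg_sq_div_mul_le {s : ℝ} (hs : s ≠ 0) (m τ : ℝ) :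
    exp (-τ ^ 2 / (2 * s ^ 2)) * ((m + τ) ^ 2 + 2 * s ^ 2 + √(2 * π) * m * s) ≤
      exp (-τ ^ 2 / (4 * s ^ 2)) * √(2 * π) * (m ^ 2 + 2 * s ^ 2) := by
  set K := √(2 * π)
  set x := τ ^ 2 / (4 * s ^ 2)
  have hpoly : (m + τ) ^ 2 + 2 * s ^ 2 + K * m * s ≤ K * (m ^ 2 + 2 * s ^ 2) * (1 + x) := by
    have h := mul_sq_add_le_of_five_div_two_le five_div_two_le_sqrt_two_mul_pi m τ s
    rw [show K * (m ^ 2 + 2 * s ^ 2) * (1 + x) =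
      K * (m ^ 2 + 2 * s ^ 2) * (4 * s ^ 2 + τ ^ 2) / (4 * s ^ 2) by simp only [x]; field_simp]
    rwa [le_div_iff₀ (by positivity), mul_comm]
  calc exp (-τ ^ 2 / (2 * s ^ 2)) * ((m + τ) ^ 2 + 2 * s ^ 2 + K * m * s)
      ≤ exp (-(2 * x)) * (K * (m ^ 2 + 2 * s ^ 2) * exp x) := by
        rw [show -τ ^ 2 / (2 * s ^ 2) = -(2 * x) by simp only [x]; field_simp; ring]
        gcongr
        exact hpoly.trans (by gcongr; linarith [add_one_le_exp x])
    _ = exp (-x) * K * (m ^ 2 + 2 * s ^ 2) := by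
        rw [show -x = -(2 * x) + x by ring, exp_add]
        ring
    _ = exp (-τ ^ 2 / (4 * s ^ 2)) * K * (m ^ 2 + 2 * s ^ 2) := by
        rw [neg_div]

theorem stmt_4_general {Ω : Type*} [MeasurableSpace Ω] (P : Measure Ω)
    (X : Ω → ℝ) (hXmeas : Measurable X) (hXnonneg : ∀ ω, 0 ≤ X ω)
    (σ : ℝ) (hσ : 0 < σ)
    (htail : ∀ t : ℝ, 0 < t →
      P {ω : Ω | (∫ ω', X ω' ∂P) + t ≤ X ω} ≤
        ENNReal.ofReal (Real.exp (-t ^ 2 / (2 * σ ^ 2))))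
    (R : ℝ) (hR : (∫ ω', X ω' ∂P) < R) :
    ∫ ω, (X ω) ^ 2 * Set.indicator {ω' : Ω | R ≤ X ω'} (fun _ => (1:ℝ)) ω ∂P ≤
      Real.exp (-(R - ∫ ω', X ω' ∂P) ^ 2 / (4 * σ ^ 2)) * Real.sqrt (2 * π) *
        ((∫ ω', X ω' ∂P) ^ 2 + 2 * σ ^ 2) := by
  set m := ∫ ω', X ω' ∂P
  have hm : 0 ≤ m := integral_nonneg hXnonneg
  set A := {ω' : Ω | R ≤ X ω'}
  have hA : MeasurableSet A := measurableSet_le measurable_const hXmeas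
  have htailA : ∀ t > 0, P.restrict A {ω | t ≤ X ω} ≤
      ENNReal.ofReal (exp (-(max R t - m) ^ 2 / (2 * σ ^ 2))) := by
    intro t ht
    rw [Measure.restrict_apply (measurableSet_le measurable_const hXmeas)]
    calc P ({ω | t ≤ X ω} ∩ A) = P {ω | m + (max R t - m) ≤ X ω} := by
          congr 1; ext ω; simp [A, and_comm]
      _ ≤ _ := htail _ (by linarith [le_max_left R t])
  have hA_bound : ∫ ω in A, X ω ^ 2 ∂P ≤
      exp (-(R - m) ^ 2 / (2 * σ ^ 2)) * (R ^ 2 + 2 * σ ^ 2 + √(2 * π) * m * σ) := by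
    rw [integral_eq_lintegral_of_nonneg_ae (ae_of_all _ fun ω => sq_nonneg _)
      (hXmeas.pow_const 2).aestronglyMeasurable]
    exact ENNReal.toReal_le_of_le_ofReal (by positivity)
      ((lintegral_sq_le_of_meas_le (ae_of_all _ hXnonneg) hXmeas.aemeasurable htailA).trans
        (lintegral_Ioi_mul_exp_neg_max_sq_le hσ hm hR.le))
  calc ∫ ω, X ω ^ 2 * A.indicator (fun _ => (1 : ℝ)) ω ∂P = ∫ ω in A, X ω ^ 2 ∂P := by
        rw [← integral_indicator hA]; congr 1; ext ω; simp [indicator]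
    _ ≤ _ := hA_bound
    _ = exp (-(R - m) ^ 2 / (2 * σ ^ 2)) * ((m + (R - m)) ^ 2 + 2 * σ ^ 2 + √(2 * π) * m * σ) := by
        ring_nf
    _ ≤ _ := exp_neg_sq_div_mul_le hσ.ne' m (R - m)

theorem stmt_4 {Ω : Type*} [MeasurableSpace Ω] (P : Measure Ω) [IsProbabilityMeasure P]
    (X : Ω → ℝ) (hXmeas : Measurable X) (hXnonneg : ∀ ω, 0 ≤ X ω)
    (hXint : Integrable X P) (σ : ℝ) (hσ : 0 < σ)
    (htail : ∀ t : ℝ, 0 < t →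
      P {ω : Ω | (∫ ω', X ω' ∂P) + t ≤ X ω} ≤
        ENNReal.ofReal (Real.exp (-t ^ 2 / (2 * σ ^ 2))))
    (R : ℝ) (hR : (∫ ω', X ω' ∂P) < R) :
    ∫ ω, (X ω) ^ 2 * Set.indicator {ω' : Ω | R ≤ X ω'} (fun _ => (1:ℝ)) ω ∂P ≤
      Real.exp (-(R - ∫ ω', X ω' ∂P) ^ 2 / (4 * σ ^ 2)) * Real.sqrt (2 * π) *
        ((∫ ω', X ω' ∂P) ^ 2 + 2 * σ ^ 2) :=
  stmt_4_general P X hXmeas hXnonneg σ hσ htail R hR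
end

section
/- Let Q > 0 and let F_Q = {x ↦ a(σ(w·x + b) - σ(b)) : a² + ‖w‖² ≤ 2Q, b ∈ ℝ} ⊂ C⁰(K) for a compact set K ⊂ B_R(0) ⊂ ℝ^d, where σ is ReLU. Then F_Q equals the image of the compact parameter set {(a,w,b) : a² + ‖w‖² ≤ 2Q, |b| ≤ √(2Q)·R} under the continuous parameter-to-function map into C⁰(K), and hence F_Q is compact in C⁰(K). -/
open scoped RealInnerProductSpace

/-!
For `‖w‖ ≤ √(2Q)` and `x ∈ K ⊆ B_R(0)` we have `|⟪w, x⟫| ≤ √(2Q) R =: c`, and on `|z| ≤ c` the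
function `b ↦ σ(z + b) - σ(b)` equals `z` for `b ≥ c` and `0` for `b ≤ -c`. Hence replacing `b` by
its projection onto `[-c, c]` does not change the neuron on `K`, so `F_Q` is the continuous image
of a closed bounded subset of the finite-dimensional parameter space.
-/

section ReLU
variable {α : Type*} [AddCommGroup α] [LinearOrder α] [IsOrderedAddMonoid α] {z b c : α}

theorem max_add_sub_max_eq_self_of_abs_le (h : |z| ≤ b) : max (z + b) 0 - max b 0 = z := by
  have hb : 0 ≤ b := (abs_nonneg z).trans h
  rw [max_eq_left (neg_le_iff_add_nonneg'.mp ((neg_le_abs z).trans h)), max_eq_left hb,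
    add_sub_cancel_right]

theorem max_add_sub_max_eq_zero_of_le_neg_abs (h : b ≤ -|z|) : max (z + b) 0 - max b 0 = 0 := by
  have hb : b ≤ 0 := h.trans (neg_nonpos.mpr (abs_nonneg z))
  rw [max_eq_right (le_neg_iff_add_nonpos_left.mp (h.trans (neg_le_neg (le_abs_self z)))),
    max_eq_right hb, sub_zero]

theorem max_add_sub_max_clamp (hz : |z| ≤ c) :
    max (z + max (-c) (min b c)) 0 - max (max (-c) (min b c)) 0 = max (z + b) 0 - max b 0 := by
  have hc : 0 ≤ c := (abs_nonneg z).trans hz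
  rcases le_total c b with hcb | hbc
  · rw [min_eq_right hcb, max_eq_right (neg_le_self hc), max_add_sub_max_eq_self_of_abs_le hz,
      max_add_sub_max_eq_self_of_abs_le (hz.trans hcb)]
  rcases le_total b (-c) with hbc' | hcb'
  · rw [min_eq_left hbc, max_eq_left hbc',
      max_add_sub_max_eq_zero_of_le_neg_abs (neg_le_neg hz),
      max_add_sub_max_eq_zero_of_le_neg_abs (hbc'.trans (neg_le_neg hz))]
  · rw [min_eq_left hbc, max_eq_right hcb']

theorem abs_max_neg_min_le (hc : 0 ≤ c) : |max (-c) (min b c)| ≤ c :=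
  abs_le.mpr ⟨le_max_left _ _, max_le (neg_le_self hc) (min_le_right _ _)⟩

end ReLU

theorem abs_inner_le_mul_of_mem_ball {E : Type*} [NormedAddCommGroup E] [InnerProductSpace ℝ E]
    {w x : E} {s R : ℝ} (hw : ‖w‖ ≤ s) (hx : x ∈ Metric.ball (0 : E) R) : |⟪w, x⟫| ≤ s * R := by
  rw [mem_ball_zero_iff] at hx
  exact (abs_real_inner_le_norm w x).trans
    (mul_le_mul hw hx.le (norm_nonneg x) ((norm_nonneg w).trans hw))

theorem isCompact_setOf_sq_add_sq_norm_le_and_abs_le {E : Type*} [NormedAddCommGroup E]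
    [ProperSpace E] (M c : ℝ) :
    IsCompact {p : ℝ × E × ℝ | p.1 ^ 2 + ‖p.2.1‖ ^ 2 ≤ M ∧ |p.2.2| ≤ c} := by
  refine Metric.isCompact_of_isClosed_isBounded ?_ ?_
  · exact (isClosed_le ((continuous_fst.pow 2).add (continuous_snd.fst.norm.pow 2))
      continuous_const).inter (isClosed_le continuous_snd.snd.abs continuous_const)
  · refine isBounded_iff_forall_norm_le.mpr ⟨max √M c, ?_⟩
    rintro ⟨a, w, b⟩ ⟨hp, hb⟩
    have ha : |a| ≤ √M := Real.abs_le_sqrt (by nlinarith [sq_nonneg ‖w‖])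
    have hw : |‖w‖| ≤ √M := Real.abs_le_sqrt (by nlinarith [sq_nonneg a])
    simp only [Prod.norm_mk, Real.norm_eq_abs, abs_norm] at hw ⊢
    exact max_le (ha.trans (le_max_left _ _))
      (max_le (hw.trans (le_max_left _ _)) (hb.trans (le_max_right _ _)))

theorem stmt_19_general {d : ℕ} (Q R : ℝ) (hR : 0 < R)
    (K : Set (EuclideanSpace ℝ (Fin d)))
    (hKR : K ⊆ Metric.ball (0 : EuclideanSpace ℝ (Fin d)) R)
    (Φ : ℝ × EuclideanSpace ℝ (Fin d) × ℝ → C(K, ℝ))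
    (hΦcont : Continuous Φ)
    (hΦ : ∀ (p : ℝ × EuclideanSpace ℝ (Fin d) × ℝ) (x : K),
      Φ p x = p.1 * (max (⟪p.2.1, (x : EuclideanSpace ℝ (Fin d))⟫ + p.2.2) 0 - max p.2.2 0)) :
    Φ '' {p | p.1 ^ 2 + ‖p.2.1‖ ^ 2 ≤ 2 * Q} =
        Φ '' {p | p.1 ^ 2 + ‖p.2.1‖ ^ 2 ≤ 2 * Q ∧ |p.2.2| ≤ Real.sqrt (2 * Q) * R} ∧
      IsCompact (Φ '' {p | p.1 ^ 2 + ‖p.2.1‖ ^ 2 ≤ 2 * Q}) := by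
  set c := √(2 * Q) * R
  have hc : 0 ≤ c := mul_nonneg (Real.sqrt_nonneg _) hR.le
  have himg : Φ '' {p | p.1 ^ 2 + ‖p.2.1‖ ^ 2 ≤ 2 * Q} =
      Φ '' {p | p.1 ^ 2 + ‖p.2.1‖ ^ 2 ≤ 2 * Q ∧ |p.2.2| ≤ c} := by
    refine (Set.image_mono fun p hp => hp.1).antisymm' ?_
    rintro _ ⟨⟨a, w, b⟩, hp : a ^ 2 + ‖w‖ ^ 2 ≤ 2 * Q, rfl⟩
    have hw : ‖w‖ ≤ √(2 * Q) := by
      simpa using Real.abs_le_sqrt (x := ‖w‖) (y := 2 * Q) (by nlinarith [sq_nonneg a])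
    refine ⟨(a, w, max (-c) (min b c)), ⟨hp, abs_max_neg_min_le hc⟩, ?_⟩
    ext x
    rw [hΦ, hΦ]
    exact congrArg (a * ·) (max_add_sub_max_clamp (abs_inner_le_mul_of_mem_ball hw (hKR x.2)))
  exact ⟨himg, himg ▸ (isCompact_setOf_sq_add_sq_norm_le_and_abs_le _ _).image hΦcont⟩

theorem stmt_19 {d : ℕ} (Q R : ℝ) (hQ : 0 < Q) (hR : 0 < R)
    (K : Set (EuclideanSpace ℝ (Fin d))) (hK : IsCompact K)
    (hKR : K ⊆ Metric.ball (0 : EuclideanSpace ℝ (Fin d)) R)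
    (Φ : ℝ × EuclideanSpace ℝ (Fin d) × ℝ → C(K, ℝ))
    (hΦcont : Continuous Φ)
    (hΦ : ∀ (p : ℝ × EuclideanSpace ℝ (Fin d) × ℝ) (x : K),
      Φ p x = p.1 * (max (⟪p.2.1, (x : EuclideanSpace ℝ (Fin d))⟫ + p.2.2) 0 - max p.2.2 0)) :
    Φ '' {p | p.1 ^ 2 + ‖p.2.1‖ ^ 2 ≤ 2 * Q} =
        Φ '' {p | p.1 ^ 2 + ‖p.2.1‖ ^ 2 ≤ 2 * Q ∧ |p.2.2| ≤ Real.sqrt (2 * Q) * R} ∧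
      IsCompact (Φ '' {p | p.1 ^ 2 + ‖p.2.1‖ ^ 2 ≤ 2 * Q}) :=
  stmt_19_general Q R hR K hKR Φ hΦcont hΦ
end
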